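/- Let F = [[A, B], [C, D]] be a real 2d×2d symplectic matrix and Θ a complex symmetric d×d matrix with positive definite real part. Define Y(F;Θ) := Dᵀ − i Bᵀ Θ and let V(F;Θ) be the 2d×d matrix obtained by stacking (Re Θ)^{−1/2} Im Θ · B + (Re Θ)^{−1/2} D over (Re Θ)^{1/2} B. Then Y(F;Θ) (Re Θ)^{−1} Y(F;Θ)* = V(F;Θ)* V(F;Θ), where * denotes conjugate transpose. -/

import Mathlib

open Matrix

/-- The standard symplectic matrix `J = [[0, I], [-I, 0]]`. -/
noncomputable def symplJ (d : ℕ) : Matrix (Fin d ⊕ Fin d) (Fin d ⊕ Fin d) ℝ :=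
  Matrix.fromBlocks 0 1 (-1) 0

/-- The real part of a complex matrix. -/
def matRe {d : ℕ} (Θ : Matrix (Fin d) (Fin d) ℂ) : Matrix (Fin d) (Fin d) ℝ :=
  Matrix.of fun i j => (Θ i j).re

/-- The imaginary part of a complex matrix. -/
def matIm {d : ℕ} (Θ : Matrix (Fin d) (Fin d) ℂ) : Matrix (Fin d) (Fin d) ℝ :=
  Matrix.of fun i j => (Θ i j).im

/-- The square root of a positive semidefinite matrix (removed from Mathlib; old definition). -/
noncomputable def Matrix.PosSemidef.sqrt {n : Type*} [Fintype n] [DecidableEq n]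
    {A : Matrix n n ℝ} (hA : A.PosSemidef) : Matrix n n ℝ :=
  hA.1.eigenvectorUnitary.1 * diagonal (Real.sqrt ∘ hA.1.eigenvalues) *
    (star hA.1.eigenvectorUnitary : Matrix n n ℝ)

lemma Matrix.PosSemidef.sqrt_mul_self {n : Type*} [Fintype n] [DecidableEq n]
    {A : Matrix n n ℝ} (hA : A.PosSemidef) : hA.sqrt * hA.sqrt = A := by
  have hU : (star hA.1.eigenvectorUnitary : Matrix n n ℝ) * hA.1.eigenvectorUnitary.1 = 1 := by
    simp
  have hD : diagonal (Real.sqrt ∘ hA.1.eigenvalues) * diagonal (Real.sqrt ∘ hA.1.eigenvalues)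
      = diagonal hA.1.eigenvalues := by
    rw [diagonal_mul_diagonal]
    congr 1; funext i
    exact Real.mul_self_sqrt (hA.eigenvalues_nonneg i)
  unfold Matrix.PosSemidef.sqrt
  calc _ = hA.1.eigenvectorUnitary.1 * (diagonal (Real.sqrt ∘ hA.1.eigenvalues) *
        ((star hA.1.eigenvectorUnitary : Matrix n n ℝ) * hA.1.eigenvectorUnitary.1) *
        diagonal (Real.sqrt ∘ hA.1.eigenvalues)) * (star hA.1.eigenvectorUnitary : Matrix n n ℝ) := by
        simp only [Matrix.mul_assoc]
    _ = A := by
      rw [hU, Matrix.mul_one, hD]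
      conv_rhs => rw [hA.1.spectral_theorem]
      simp

lemma Matrix.PosSemidef.isHermitian_sqrt {n : Type*} [Fintype n] [DecidableEq n]
    {A : Matrix n n ℝ} (hA : A.PosSemidef) : hA.sqrt.IsHermitian := by
  unfold Matrix.PosSemidef.sqrt Matrix.IsHermitian
  simp [Matrix.conjTranspose_mul, Matrix.diagonal_conjTranspose, Matrix.mul_assoc,
    Matrix.star_eq_conjTranspose, Matrix.conjTranspose_eq_transpose_of_trivial]

/-- `Y(F;Θ) = Dᵀ − i Bᵀ Θ`. -/
noncomputable def calY {d : ℕ} (B D : Matrix (Fin d) (Fin d) ℝ)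
    (Θ : Matrix (Fin d) (Fin d) ℂ) : Matrix (Fin d) (Fin d) ℂ :=
  (D.map Complex.ofReal)ᵀ - Complex.I • ((B.map Complex.ofReal)ᵀ * Θ)

/-- `V(F;Θ)`: the 2d×d real matrix with top block `(Re Θ)^{−1/2} Im Θ · B + (Re Θ)^{−1/2} D`
and bottom block `(Re Θ)^{1/2} B`. -/
noncomputable def calV {d : ℕ} (B D : Matrix (Fin d) (Fin d) ℝ)
    (Θ : Matrix (Fin d) (Fin d) ℂ) (hΘre : (matRe Θ).PosDef) :
    Matrix (Fin d ⊕ Fin d) (Fin d) ℝ :=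
  Matrix.of fun i j =>
    Sum.elim
      (fun k => ((hΘre.posSemidef.sqrt)⁻¹ * matIm Θ * B + (hΘre.posSemidef.sqrt)⁻¹ * D) k j)
      (fun k => (hΘre.posSemidef.sqrt * B) k j) i

section helpers

variable {d : ℕ}

lemma mapC_mul {l m n : Type*} [Fintype m] (M : Matrix l m ℝ) (N : Matrix m n ℝ) :
    (M * N).map Complex.ofReal = M.map Complex.ofReal * N.map Complex.ofReal :=
  Matrix.map_mul (f := Complex.ofRealHom)

lemma mapC_add (M N : Matrix (Fin d) (Fin d) ℝ) :
    (M + N).map Complex.ofReal = M.map Complex.ofReal + N.map Complex.ofReal := by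
  ext i j; simp

lemma mapC_conjT {m n : Type*} [Fintype m] [Fintype n] (M : Matrix m n ℝ) :
    (M.map Complex.ofReal)ᴴ = Mᵀ.map Complex.ofReal := by
  ext i j; simp [Matrix.conjTranspose_apply, Complex.conj_ofReal]

end helpers

/-- For a real symplectic `F = [[A,B],[C,D]]` and `Θ` complex symmetric with
positive definite real part, `Y(F;Θ) (Re Θ)⁻¹ Y(F;Θ)* = V(F;Θ)* V(F;Θ)`. -/
theorem calY_mul_reInv_mul_star {d : ℕ} (A B C D : Matrix (Fin d) (Fin d) ℝ)
    (Θ : Matrix (Fin d) (Fin d) ℂ)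
    (hsymp : (Matrix.fromBlocks A B C D)ᵀ * symplJ d * Matrix.fromBlocks A B C D = symplJ d)
    (hΘsymm : Θᵀ = Θ)
    (hΘre : (matRe Θ).PosDef) :
    calY B D Θ * ((matRe Θ)⁻¹).map Complex.ofReal * (calY B D Θ)ᴴ =
      ((calV B D Θ hΘre).map Complex.ofReal)ᴴ * (calV B D Θ hΘre).map Complex.ofReal := by
  classical
  have hRdet : IsUnit (matRe Θ).det := isUnit_iff_ne_zero.mpr hΘre.det_pos.ne'
  have hss : hΘre.posSemidef.sqrt * hΘre.posSemidef.sqrt = matRe Θ :=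
    hΘre.posSemidef.sqrt_mul_self
  have hsH : (hΘre.posSemidef.sqrt)ᵀ = hΘre.posSemidef.sqrt := by
    have h := hΘre.posSemidef.isHermitian_sqrt
    calc (hΘre.posSemidef.sqrt)ᵀ = (hΘre.posSemidef.sqrt)ᴴ := by
          ext i j; simp [Matrix.conjTranspose_apply]
    _ = hΘre.posSemidef.sqrt := h
  have hsinv : (hΘre.posSemidef.sqrt)⁻¹ * (hΘre.posSemidef.sqrt)⁻¹ = (matRe Θ)⁻¹ := by
    rw [show (matRe Θ)⁻¹ = (hΘre.posSemidef.sqrt * hΘre.posSemidef.sqrt)⁻¹ from by rw [hss],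
      Matrix.mul_inv_rev]
  have hΘflip : ∀ i j, Θ i j = Θ j i := fun i j => congrFun (congrFun hΘsymm.symm i) j
  have hRsymm : (matRe Θ)ᵀ = matRe Θ := by ext i j; simp [matRe, ← hΘflip i j]
  have hSsymm : (matIm Θ)ᵀ = matIm Θ := by ext i j; simp [matIm, ← hΘflip i j]
  -- symplectic relation
  have hBD : Bᵀ * D = Dᵀ * B := by
    have h := congrArg Matrix.toBlocks₂₂ hsymp
    simp [symplJ, Matrix.fromBlocks_transpose, Matrix.fromBlocks_multiply,
      Matrix.toBlocks_fromBlocks₂₂] at h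
    rw [neg_add_eq_zero] at h
    exact h.symm
  have hPT : (matIm Θ * B + D)ᵀ = Bᵀ * matIm Θ + Dᵀ := by
    rw [Matrix.transpose_add, Matrix.transpose_mul, hSsymm]
  -- structure of VᵀV
  have hVfrom : calV B D Θ hΘre =
      Matrix.fromRows
        ((hΘre.posSemidef.sqrt)⁻¹ * matIm Θ * B + (hΘre.posSemidef.sqrt)⁻¹ * D)
        (hΘre.posSemidef.sqrt * B) := by
    ext i j; cases i <;> rfl
  have hstruct : (calV B D Θ hΘre)ᵀ * calV B D Θ hΘre =
      ((hΘre.posSemidef.sqrt)⁻¹ * matIm Θ * B + (hΘre.posSemidef.sqrt)⁻¹ * D)ᵀ *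
        ((hΘre.posSemidef.sqrt)⁻¹ * matIm Θ * B + (hΘre.posSemidef.sqrt)⁻¹ * D) +
      (hΘre.posSemidef.sqrt * B)ᵀ * (hΘre.posSemidef.sqrt * B) := by
    rw [hVfrom, Matrix.transpose_fromRows, Matrix.fromCols_mul_fromRows]
  have hT : (hΘre.posSemidef.sqrt)⁻¹ * matIm Θ * B + (hΘre.posSemidef.sqrt)⁻¹ * D =
      (hΘre.posSemidef.sqrt)⁻¹ * (matIm Θ * B + D) := by
    rw [Matrix.mul_add, Matrix.mul_assoc]
  have hVV : (calV B D Θ hΘre)ᵀ * calV B D Θ hΘre =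
      (matIm Θ * B + D)ᵀ * (matRe Θ)⁻¹ * (matIm Θ * B + D) + Bᵀ * matRe Θ * B := by
    rw [hstruct, hT, Matrix.transpose_mul, Matrix.transpose_mul,
      Matrix.transpose_nonsing_inv, hsH]
    simp only [Matrix.mul_assoc]
    rw [← Matrix.mul_assoc (hΘre.posSemidef.sqrt)⁻¹ (hΘre.posSemidef.sqrt)⁻¹, hsinv,
      ← Matrix.mul_assoc hΘre.posSemidef.sqrt hΘre.posSemidef.sqrt, hss]
  -- complex decomposition of Θ
  have hΘdecomp : Θ = (matRe Θ).map Complex.ofReal +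
      Complex.I • (matIm Θ).map Complex.ofReal := by
    ext i j
    simp [matRe, matIm, Matrix.add_apply, Matrix.smul_apply, Complex.ext_iff]
  set p := (Bᵀ * matIm Θ + Dᵀ).map Complex.ofReal with hpdef
  set q := (Bᵀ * matRe Θ).map Complex.ofReal with hqdef
  set p' := (matIm Θ * B + D).map Complex.ofReal with hp'def
  set q' := (matRe Θ * B).map Complex.ofReal with hq'def
  set m := ((matRe Θ)⁻¹).map Complex.ofReal with hmdef
  have hBt : (B.map Complex.ofReal)ᵀ = Bᵀ.map Complex.ofReal := (Matrix.transpose_map).symm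
  have hDt : (D.map Complex.ofReal)ᵀ = Dᵀ.map Complex.ofReal := (Matrix.transpose_map).symm
  have hY : calY B D Θ = p - Complex.I • q := by
    rw [calY, hΘdecomp, hBt, hDt, Matrix.mul_add, Matrix.mul_smul, smul_add, smul_smul,
      Complex.I_mul_I, neg_one_smul, hpdef, hqdef, mapC_add, mapC_mul, mapC_mul]
    abel
  have hYH : (calY B D Θ)ᴴ = p' + Complex.I • q' := by
    rw [hY, Matrix.conjTranspose_sub, Matrix.conjTranspose_smul, Complex.star_def,
      Complex.conj_I, mapC_conjT, mapC_conjT, neg_smul, sub_neg_eq_add]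
    simp only [Matrix.transpose_add, Matrix.transpose_mul, Matrix.transpose_transpose,
      hSsymm, hRsymm, hpdef, hqdef, hp'def, hq'def]
  -- real identities
  have hRinvR : (matRe Θ)⁻¹ * matRe Θ = 1 := Matrix.nonsing_inv_mul _ hRdet
  have hRRinv : matRe Θ * (matRe Θ)⁻¹ = 1 := Matrix.mul_nonsing_inv _ hRdet
  have e1 : (Bᵀ * matIm Θ + Dᵀ) * (matRe Θ)⁻¹ * (matRe Θ * B) =
      (Bᵀ * matIm Θ + Dᵀ) * B := by
    rw [Matrix.mul_assoc, ← Matrix.mul_assoc (matRe Θ)⁻¹, hRinvR, Matrix.one_mul]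
  have e2 : (Bᵀ * matRe Θ) * (matRe Θ)⁻¹ * (matIm Θ * B + D) =
      Bᵀ * (matIm Θ * B + D) := by
    rw [Matrix.mul_assoc Bᵀ (matRe Θ) (matRe Θ)⁻¹, hRRinv, Matrix.mul_one]
  have h1 : (Bᵀ * matIm Θ + Dᵀ) * (matRe Θ)⁻¹ * (matRe Θ * B) =
      (Bᵀ * matRe Θ) * (matRe Θ)⁻¹ * (matIm Θ * B + D) := by
    rw [e1, e2, Matrix.add_mul, Matrix.mul_add, ← Matrix.mul_assoc, ← hBD]
  have h2 : (Bᵀ * matRe Θ) * (matRe Θ)⁻¹ * (matRe Θ * B) = Bᵀ * matRe Θ * B := by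
    rw [Matrix.mul_assoc (Bᵀ * matRe Θ) (matRe Θ)⁻¹, ← Matrix.mul_assoc (matRe Θ)⁻¹,
      hRinvR, Matrix.one_mul]
  have hpmq : p * m * q' = q * m * p' := by
    rw [hpdef, hqdef, hp'def, hq'def, hmdef, ← mapC_mul, ← mapC_mul, ← mapC_mul, ← mapC_mul, h1]
  have hqmq : q * m * q' = (Bᵀ * matRe Θ * B).map Complex.ofReal := by
    rw [hqdef, hq'def, hmdef, ← mapC_mul, ← mapC_mul, h2]
  have hpmp : p * m * p' =
      ((matIm Θ * B + D)ᵀ * (matRe Θ)⁻¹ * (matIm Θ * B + D)).map Complex.ofReal := by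
    rw [hpdef, hp'def, hmdef, ← mapC_mul, ← mapC_mul, hPT]
  have key : (p - Complex.I • q) * m * (p' + Complex.I • q') =
      p * m * p' + q * m * q' + Complex.I • (p * m * q' - q * m * p') := by
    simp only [Matrix.sub_mul, Matrix.mul_add, Matrix.smul_mul, Matrix.mul_smul,
      smul_smul, Complex.I_mul_I, neg_one_smul, smul_sub]
    abel
  rw [hYH, hY, key, hpmq, sub_self, smul_zero, add_zero, hpmp, hqmq,
    mapC_conjT, ← mapC_mul, hVV, mapC_add]
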